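/- If a root triangle with assigned root type τ ∈ {0,1} is uniformly refined to level L, then any contiguous TM segment of level-L subtriangles that contains the last subtriangle in TM order, or that contains the first subtriangle in TM order, has at most L + 1 face-connected components. -/

import Mathlib

/-!
A segment containing the last subtriangle is a TM suffix, starting at some `c :: m`. Inside the
root it consists of the suffix of `m` in child `c` together with every child that follows `c` in
TM order, and these children are complete. By induction on the level, a suffix is the union of a
face-connected piece containing the last subtriangle and at most `L` further face-connected
pieces: the complete children hang together through child `3`, which shares an edge with each of
its siblings, and the pairs of leaves sharing these edges are found by shrinking the children
homothetically towards a common vertex. Listing the root's vertices in reverse order swaps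
children `0` and `2`, flips the type and reverses the TM order, which turns a segment containing
the first subtriangle into one containing the last.
-/

/-- Points of the plane. -/
abbrev TMV : Type := Fin 2 → ℝ

/-- Midpoint of two points of the plane. -/
noncomputable def tmMid (a b : TMV) : TMV := (1 / 2 : ℝ) • (a + b)

/-- Bey's refinement: the four children of a triangle `[x 0, x 1, x 2]`. -/
noncomputable def beyChild (x : Fin 3 → TMV) : Fin 4 → Fin 3 → TMV :=
  ![![x 0, tmMid (x 0) (x 1), tmMid (x 0) (x 2)],
    ![tmMid (x 0) (x 1), x 1, tmMid (x 1) (x 2)],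
    ![tmMid (x 0) (x 2), tmMid (x 1) (x 2), x 2],
    ![tmMid (x 0) (x 1), tmMid (x 0) (x 2), tmMid (x 1) (x 2)]]

/-- The vertices of the subtriangle of the root `x` reached by the successive
child choices recorded in the list `p`. -/
noncomputable def tmVerts (x : Fin 3 → TMV) : List (Fin 4) → Fin 3 → TMV
  | [] => x
  | i :: p => tmVerts (beyChild x i) p

/-- The type of the subtriangle reached by path `p` from a root of type `τ`:
children `T_0, T_1, T_2` inherit the parent's type, `T_3` has the opposite type. -/
def tmType (τ : Fin 2) : List (Fin 4) → Fin 2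
  | [] => τ
  | i :: p => tmType (if i = 3 then 1 - τ else τ) p

/-- The position of Bey child `i` in the TM traversal order of the children of a
parent of type `b`: order `T_0, T_1, T_3, T_2` for type 0 and `T_0, T_3, T_1, T_2`
for type 1. -/
def tmChildRank (b : Fin 2) : Fin 4 → Fin 4 :=
  if b = 0 then ![0, 1, 3, 2] else ![0, 2, 3, 1]

/-- The TM index of the level-`p.length` subtriangle given by path `p` from a root
of type `τ`, among all subtriangles of that level. -/
def tmIndex (τ : Fin 2) : List (Fin 4) → ℕ
  | [] => 0
  | i :: p => (tmChildRank τ i : ℕ) * 4 ^ p.length + tmIndex (if i = 3 then 1 - τ else τ) p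

/-- The closed triangle spanned by the three vertices. -/
def triSet (x : Fin 3 → TMV) : Set TMV := convexHull ℝ {x 0, x 1, x 2}

/-- `e` is a complete edge of the triangle with vertices `x`. -/
def triIsEdge (x : Fin 3 → TMV) (e : Set TMV) : Prop :=
  ∃ i j : Fin 3, i ≠ j ∧ e = segment ℝ (x i) (x j)

/-- Two triangles are face-neighbors if their intersection is a complete edge of both. -/
def triFaceNbr (x y : Fin 3 → TMV) : Prop :=
  ∃ e, triIsEdge x e ∧ triIsEdge y e ∧ triSet x ∩ triSet y = e

/-- A set `S` of subtriangle paths (with root vertices `x0`) is face-connected. -/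
def triFaceConnected (x0 : Fin 3 → TMV) (S : Set (List (Fin 4))) : Prop :=
  ∀ p ∈ S, ∀ q ∈ S,
    Relation.ReflTransGen
      (fun a b => a ∈ S ∧ b ∈ S ∧ triFaceNbr (tmVerts x0 a) (tmVerts x0 b)) p q

/-- `S` has at most `n` face-connected components. -/
def triCompBound (x0 : Fin 3 → TMV) (S : Set (List (Fin 4))) (n : ℕ) : Prop :=
  ∃ f : Fin n → Set (List (Fin 4)), S = ⋃ i, f i ∧ ∀ i, triFaceConnected x0 (f i)

/-- `S` is a contiguous segment of the TM curve through the uniform level-`L`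
refinement of a root of type `τ`: a set of level-`L` paths forming an interval
in the TM order. -/
def tmSegment (τ : Fin 2) (L : ℕ) (S : Set (List (Fin 4))) : Prop :=
  (∀ p ∈ S, p.length = L) ∧
  ∀ p q r : List (Fin 4), p.length = L → q.length = L → r.length = L →
    p ∈ S → r ∈ S → tmIndex τ p ≤ tmIndex τ q → tmIndex τ q ≤ tmIndex τ r → q ∈ S

open Relation

def cross (u v : TMV) : ℝ := u 0 * v 1 - u 1 * v 0

def triDet (x : Fin 3 → TMV) : ℝ := cross (x 1 - x 0) (x 2 - x 0)

lemma cross_smul_add_smul_sub (a w : TMV) {s t : ℝ} (hst : s + t = 1) (p q : TMV) :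
    cross (s • p + t • q - a) w = s * cross (p - a) w + t * cross (q - a) w := by
  obtain rfl : t = 1 - s := by linarith
  simp only [cross, Pi.add_apply, Pi.sub_apply, Pi.smul_apply, smul_eq_mul]
  ring

/-- The affine function `y ↦ cross (y - a) (b - a)` vanishes on `[a, b]` and has the sign of its
value at `c` on the rest of the triangle `a b c`; opposite signs at `c` and `d` therefore confine
the intersection to the segment. -/
lemma convexHull_inter_convexHull_eq_segment {a b c d : TMV}
    (hsign : cross (c - a) (b - a) * cross (d - a) (b - a) < 0) :
    convexHull ℝ {a, b, c} ∩ convexHull ℝ {a, b, d} = segment ℝ a b := by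
  have h_seg : ∀ y ∈ segment ℝ a b, cross (y - a) (b - a) = 0 := by
    rintro y ⟨s, t, -, -, hst, rfl⟩
    rw [cross_smul_add_smul_sub a _ hst]
    simp only [cross, sub_self, Pi.zero_apply]
    ring
  have h_hull : ∀ e, ∀ y ∈ convexHull ℝ {a, b, e}, ∃ t : ℝ, 0 ≤ t ∧
      cross (y - a) (b - a) = t * cross (e - a) (b - a) ∧ (t = 0 → y ∈ segment ℝ a b) := by
    intro e y hy
    rw [← convexJoin_segment_singleton, mem_convexJoin] at hy
    obtain ⟨z, hz, e', rfl, s, t, -, ht, hst, rfl⟩ := hy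
    refine ⟨t, ht, by rw [cross_smul_add_smul_sub a _ hst, h_seg z hz]; ring, ?_⟩
    rintro rfl
    obtain rfl : s = 1 := by linarith
    simpa using hz
  refine subset_antisymm (fun y ⟨hyc, hyd⟩ => ?_) fun y hy =>
    ⟨segment_subset_convexHull (by simp) (by simp) hy,
      segment_subset_convexHull (by simp) (by simp) hy⟩
  obtain ⟨r, hr, hyr, hr0⟩ := h_hull c y hyc
  obtain ⟨s, hs, hys, -⟩ := h_hull d y hyd
  refine hr0 (le_antisymm ?_ hr)
  rcases mul_neg_iff.mp hsign with ⟨h1, h2⟩ | ⟨h1, h2⟩ <;> nlinarith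

lemma triFaceNbr_of_opposite {X Y : Fin 3 → TMV} {a b c d : TMV}
    (hX : ({X 0, X 1, X 2} : Set TMV) = {a, b, c}) (hY : ({Y 0, Y 1, Y 2} : Set TMV) = {a, b, d})
    (hXe : triIsEdge X (segment ℝ a b)) (hYe : triIsEdge Y (segment ℝ a b))
    (hsign : cross (c - a) (b - a) * cross (d - a) (b - a) < 0) :
    triFaceNbr X Y :=
  ⟨_, hXe, hYe, by rw [triSet, triSet, hX, hY, convexHull_inter_convexHull_eq_segment hsign]⟩

lemma triFaceNbr.symm {X Y : Fin 3 → TMV} (h : triFaceNbr X Y) : triFaceNbr Y X := by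
  obtain ⟨e, hX, hY, he⟩ := h
  exact ⟨e, hY, hX, by rw [Set.inter_comm, he]⟩

lemma triFaceNbr.comp_affineMap {X Y : Fin 3 → TMV} (h : triFaceNbr X Y) (f : TMV →ᵃ[ℝ] TMV)
    (hf : Function.Injective f) : triFaceNbr (f ∘ X) (f ∘ Y) := by
  have h_set (Z : Fin 3 → TMV) : triSet (f ∘ Z) = f '' triSet Z := by
    simp [triSet, f.image_convexHull, Set.image_insert_eq]
  have h_edge (Z : Fin 3 → TMV) (e : Set TMV) (he : triIsEdge Z e) :
      triIsEdge (f ∘ Z) (f '' e) := by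
    obtain ⟨i, j, hij, rfl⟩ := he
    exact ⟨i, j, hij, image_segment ℝ f _ _⟩
  obtain ⟨e, hX, hY, he⟩ := h
  exact ⟨f '' e, h_edge X e hX, h_edge Y e hY, by rw [h_set, h_set, ← Set.image_inter hf, he]⟩

lemma triDet_beyChild (x : Fin 3 → TMV) (i : Fin 4) :
    triDet (beyChild x i) = (if i = 3 then -1 else 1) * triDet x / 4 := by
  fin_cases i <;>
    simp [triDet, cross, beyChild, tmMid] <;> ring

lemma triDet_beyChild_ne_zero {x : Fin 3 → TMV} (hx : triDet x ≠ 0) (i : Fin 4) :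
    triDet (beyChild x i) ≠ 0 := by
  rw [triDet_beyChild]
  split_ifs <;> simpa using hx

/-- If `u × v = 0`, both `(v 1, -u 1)` and `(v 0, -u 0)` are linear relations between `u` and `v`;
affine independence kills them, which forces `u = 0`. -/
lemma triDet_ne_zero {x : Fin 3 → TMV} (hx : AffineIndependent ℝ x) : triDet x ≠ 0 := by
  intro h
  set u := x 1 - x 0
  set v := x 2 - x 0
  have h_indep (s t : ℝ) (h0 : s * u 0 + t * v 0 = 0) (h1 : s * u 1 + t * v 1 = 0) :
      s = 0 ∧ t = 0 := by
    have hw := hx.eq_zero_of_sum_eq_zero (s := Finset.univ) (w := ![-(s + t), s, t])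
      (by simp [Fin.sum_univ_three]) ?_
    · exact ⟨hw 1 (by simp), hw 2 (by simp)⟩
    simp only [u, v, Pi.sub_apply] at h0 h1
    refine funext (Fin.forall_fin_two.2 ⟨?_, ?_⟩) <;>
      simp only [Fin.sum_univ_three, Finset.sum_apply, Pi.smul_apply, smul_eq_mul,
        Matrix.cons_val_zero, Matrix.cons_val_one, Matrix.cons_val, Pi.zero_apply]
    · linear_combination h0
    · linear_combination h1
  have hcross : u 0 * v 1 - u 1 * v 0 = 0 := h
  have hv1 := h_indep (v 1) (-u 1) (by linear_combination hcross) (by ring)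
  have hv0 := h_indep (v 0) (-u 0) (by ring) (by linear_combination -hcross)
  have hu := h_indep 1 0 (by linarith [hv0.2]) (by linarith [hv1.2])
  exact one_ne_zero hu.1

lemma beyChild_castSucc (x : Fin 3 → TMV) (j : Fin 3) :
    beyChild x j.castSucc = AffineMap.homothety (x j) (2⁻¹ : ℝ) ∘ x := by
  ext k : 1
  fin_cases j <;> fin_cases k <;> simp [beyChild, tmMid, AffineMap.homothety_apply] <;> module

lemma tmVerts_replicate (x : Fin 3 → TMV) (j : Fin 3) (k : ℕ) :
    tmVerts x (List.replicate k j.castSucc) =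
      AffineMap.homothety (x j) ((2⁻¹ : ℝ) ^ k) ∘ x := by
  induction k generalizing x with
  | zero => ext; simp [tmVerts]
  | succ k ih =>
    rw [List.replicate_succ, tmVerts, ih, beyChild_castSucc, pow_succ, AffineMap.homothety_mul]
    simp [Function.comp_def]

lemma triFaceNbr_beyChild_three {x : Fin 3 → TMV} (hx : triDet x ≠ 0) (i : Fin 4)
    (hi : i ≠ 3) :
    triFaceNbr (beyChild x i) (beyChild x 3) := by
  have hsq : 0 < triDet x ^ 2 := by positivity
  simp only [triDet, cross, Pi.sub_apply] at hsq
  have rotate (a b c : TMV) : ({a, b, c} : Set TMV) = {b, c, a} :=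
    (Set.insert_comm _ _ _).trans (congrArg _ (Set.pair_comm _ _))
  have swap (a b c : TMV) : ({a, b, c} : Set TMV) = {a, c, b} := congrArg _ (Set.pair_comm _ _)
  obtain rfl | rfl | rfl : i = 0 ∨ i = 1 ∨ i = 2 := by revert i; decide
  · refine triFaceNbr_of_opposite (a := tmMid (x 0) (x 1)) (b := tmMid (x 0) (x 2)) (c := x 0)
      (d := tmMid (x 1) (x 2)) (rotate _ _ _) rfl ⟨1, 2, by decide, rfl⟩ ⟨0, 1, by decide, rfl⟩ ?_
    simp only [cross, tmMid, Pi.sub_apply, Pi.add_apply, Pi.smul_apply, smul_eq_mul]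
    nlinarith
  · refine triFaceNbr_of_opposite (a := tmMid (x 0) (x 1)) (b := tmMid (x 1) (x 2)) (c := x 1)
      (d := tmMid (x 0) (x 2)) (swap _ _ _) (swap _ _ _) ⟨0, 2, by decide, rfl⟩
      ⟨0, 2, by decide, rfl⟩ ?_
    simp only [cross, tmMid, Pi.sub_apply, Pi.add_apply, Pi.smul_apply, smul_eq_mul]
    nlinarith
  · refine triFaceNbr_of_opposite (a := tmMid (x 0) (x 2)) (b := tmMid (x 1) (x 2)) (c := x 2)
      (d := tmMid (x 0) (x 1)) rfl (rotate _ _ _) ⟨0, 1, by decide, rfl⟩ ⟨1, 2, by decide, rfl⟩ ?_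
    simp only [cross, tmMid, Pi.sub_apply, Pi.add_apply, Pi.smul_apply, smul_eq_mul]
    nlinarith

lemma triFaceNbr_cons_replicate {x : Fin 3 → TMV} {i i' : Fin 4} {j j' : Fin 3}
    (h : triFaceNbr (beyChild x i) (beyChild x i')) (hv : beyChild x i j = beyChild x i' j')
    (k : ℕ) :
    triFaceNbr (tmVerts x (i :: List.replicate k j.castSucc))
      (tmVerts x (i' :: List.replicate k j'.castSucc)) := by
  simp only [tmVerts, tmVerts_replicate, hv]
  exact h.comp_affineMap _ (AffineMap.homothety_injective _ (by positivity))

lemma triFaceNbr_zero_two_three_one {x : Fin 3 → TMV} (hx : triDet x ≠ 0) (k : ℕ) :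
    triFaceNbr (tmVerts x (0 :: List.replicate k 2)) (tmVerts x (3 :: List.replicate k 1)) :=
  triFaceNbr_cons_replicate (j := 2) (j' := 1) (triFaceNbr_beyChild_three hx 0 (by decide)) rfl k

lemma triFaceNbr_one_two_three_two {x : Fin 3 → TMV} (hx : triDet x ≠ 0) (k : ℕ) :
    triFaceNbr (tmVerts x (1 :: List.replicate k 2)) (tmVerts x (3 :: List.replicate k 2)) :=
  triFaceNbr_cons_replicate (j := 2) (j' := 2) (triFaceNbr_beyChild_three hx 1 (by decide)) rfl k

lemma triFaceNbr_two_one_three_two {x : Fin 3 → TMV} (hx : triDet x ≠ 0) (k : ℕ) :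
    triFaceNbr (tmVerts x (2 :: List.replicate k 1)) (tmVerts x (3 :: List.replicate k 2)) :=
  triFaceNbr_cons_replicate (j := 1) (j' := 2) (triFaceNbr_beyChild_three hx 2 (by decide)) rfl k

/-- `triFaceConnected x S` is connectivity under this relation. -/
def faceAdj (x : Fin 3 → TMV) (S : Set (List (Fin 4))) (a b : List (Fin 4)) : Prop :=
  a ∈ S ∧ b ∈ S ∧ triFaceNbr (tmVerts x a) (tmVerts x b)

instance (x : Fin 3 → TMV) (S : Set (List (Fin 4))) : Std.Symm (faceAdj x S) :=
  ⟨fun _ _ h => ⟨h.2.1, h.1, h.2.2.symm⟩⟩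

lemma reflTransGen_faceAdj_mono {x : Fin 3 → TMV} {S T : Set (List (Fin 4))} (hST : S ⊆ T)
    {a b : List (Fin 4)} (h : ReflTransGen (faceAdj x S) a b) : ReflTransGen (faceAdj x T) a b :=
  ReflTransGen.mono (fun _ _ h => ⟨hST h.1, hST h.2.1, h.2.2⟩) _ _ h

lemma triFaceConnected_of_reach {x : Fin 3 → TMV} {H T : Set (List (Fin 4))}
    (hH : triFaceConnected x H) (hHT : H ⊆ T)
    (hreach : ∀ p ∈ T, ∃ h ∈ H, ReflTransGen (faceAdj x T) p h) : triFaceConnected x T := by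
  intro p hp q hq
  obtain ⟨h, hh, hph⟩ := hreach p hp
  obtain ⟨h', hh', hqh'⟩ := hreach q hq
  exact (hph.trans (reflTransGen_faceAdj_mono hHT (hH h hh h' hh'))).trans (symm hqh')

lemma triFaceConnected.union {x : Fin 3 → TMV} {A B : Set (List (Fin 4))}
    (hA : triFaceConnected x A) (hB : triFaceConnected x B) {a b : List (Fin 4)} (ha : a ∈ A)
    (hb : b ∈ B) (hab : triFaceNbr (tmVerts x a) (tmVerts x b)) :
    triFaceConnected x (A ∪ B) := by
  refine triFaceConnected_of_reach hA Set.subset_union_left fun p hp => ?_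
  rcases hp with hp | hp
  · exact ⟨p, hp, .refl⟩
  · exact ⟨a, ha, (reflTransGen_faceAdj_mono Set.subset_union_right (hB p hp b hb)).tail
      (symm (⟨.inl ha, .inr hb, hab⟩ : faceAdj x _ a b))⟩

lemma triFaceConnected.image_cons {x : Fin 3 → TMV} {i : Fin 4} {A : Set (List (Fin 4))}
    (h : triFaceConnected (beyChild x i) A) : triFaceConnected x (List.cons i '' A) := by
  rintro _ ⟨p, hp, rfl⟩ _ ⟨q, hq, rfl⟩
  exact (h p hp q hq).lift _ fun a b hab =>
    ⟨⟨a, hab.1, rfl⟩, ⟨b, hab.2.1, rfl⟩, hab.2.2⟩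

def levelSet (L : ℕ) : Set (List (Fin 4)) := {p | p.length = L}

lemma mem_levelSet_replicate (L : ℕ) (a : Fin 4) : List.replicate L a ∈ levelSet L :=
  List.length_replicate ..

lemma levelSet_succ (L : ℕ) : levelSet (L + 1) = ⋃ d, List.cons d '' levelSet L := by
  ext (_ | ⟨d, p⟩) <;> simp [levelSet]

lemma exists_triFaceNbr_cons_three {x : Fin 3 → TMV} (hx : triDet x ≠ 0) (L : ℕ) {d : Fin 4}
    (hd : d ≠ 3) : ∃ a ∈ levelSet L, ∃ b ∈ levelSet L,
      triFaceNbr (tmVerts x (d :: a)) (tmVerts x (3 :: b)) := by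
  obtain rfl | rfl | rfl : d = 0 ∨ d = 1 ∨ d = 2 := by revert d; decide
  · exact ⟨_, mem_levelSet_replicate .., _, mem_levelSet_replicate ..,
      triFaceNbr_zero_two_three_one hx L⟩
  · exact ⟨_, mem_levelSet_replicate .., _, mem_levelSet_replicate ..,
      triFaceNbr_one_two_three_two hx L⟩
  · exact ⟨_, mem_levelSet_replicate .., _, mem_levelSet_replicate ..,
      triFaceNbr_two_one_three_two hx L⟩

lemma triFaceConnected_biUnion_children {x : Fin 3 → TMV} (hx : triDet x ≠ 0) {L : ℕ}
    (hchild : ∀ d, triFaceConnected (beyChild x d) (levelSet L)) {D : Set (Fin 4)}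
    (h3 : 3 ∈ D) :
    triFaceConnected x (⋃ d ∈ D, List.cons d '' levelSet L) := by
  have hsub : ∀ d ∈ D, List.cons d '' levelSet L ⊆ ⋃ d ∈ D, List.cons d '' levelSet L :=
    fun d hd => Set.subset_biUnion_of_mem (u := fun d => List.cons d '' levelSet L) hd
  refine triFaceConnected_of_reach (hchild 3).image_cons (hsub 3 h3) ?_
  simp only [Set.mem_iUnion, exists_prop]
  rintro _ ⟨d, hd, p, hp, rfl⟩
  by_cases hd3 : d = 3
  · subst hd3
    exact ⟨_, ⟨p, hp, rfl⟩, .refl⟩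
  obtain ⟨a, ha, b, hb, hab⟩ := exists_triFaceNbr_cons_three hx L hd3
  refine ⟨3 :: b, ⟨b, hb, rfl⟩, ?_⟩
  have hpa := (hchild d).image_cons _ ⟨p, hp, rfl⟩ _ ⟨a, ha, rfl⟩
  exact (reflTransGen_faceAdj_mono (hsub d hd) hpa).tail
    ⟨hsub d hd ⟨a, ha, rfl⟩, hsub 3 h3 ⟨b, hb, rfl⟩, hab⟩

lemma triFaceConnected_levelSet {x : Fin 3 → TMV} (hx : triDet x ≠ 0) (L : ℕ) :
    triFaceConnected x (levelSet L) := by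
  induction L generalizing x with
  | zero =>
    rintro p hp q hq
    rw [List.eq_nil_of_length_eq_zero hp, List.eq_nil_of_length_eq_zero hq]
  | succ L ih =>
    have := triFaceConnected_biUnion_children hx (fun d => ih (triDet_beyChild_ne_zero hx d))
      (Set.mem_univ 3)
    rwa [levelSet_succ, ← Set.biUnion_univ]

def childType (τ : Fin 2) (i : Fin 4) : Fin 2 := if i = 3 then 1 - τ else τ

lemma tmIndex_cons (τ : Fin 2) (i : Fin 4) (p : List (Fin 4)) :
    tmIndex τ (i :: p) = tmChildRank τ i * 4 ^ p.length + tmIndex (childType τ i) p := rfl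

lemma tmIndex_lt (τ : Fin 2) (p : List (Fin 4)) : tmIndex τ p < 4 ^ p.length := by
  induction p generalizing τ with
  | nil => simp [tmIndex]
  | cons i p ih =>
    have hr : (tmChildRank τ i : ℕ) ≤ 3 := Nat.le_of_lt_succ (tmChildRank τ i).isLt
    rw [tmIndex_cons, List.length_cons, pow_succ]
    nlinarith [ih (childType τ i)]

lemma mul_add_le_mul_add_iff {N a b r s : ℕ} (ha : a < N) (hb : b < N) :
    r * N + a ≤ s * N + b ↔ r < s ∨ r = s ∧ a ≤ b := by
  constructor
  · intro h
    rcases lt_trichotomy r s with hrs | rfl | hrs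
    · exact .inl hrs
    · exact .inr ⟨rfl, by omega⟩
    · nlinarith
  · rintro (hrs | ⟨rfl, hab⟩)
    · nlinarith
    · omega

lemma tmChildRank_injective (τ : Fin 2) : Function.Injective (tmChildRank τ) := by
  revert τ; decide

lemma tmIndex_cons_le_cons_iff (τ : Fin 2) (c d : Fin 4) {p q : List (Fin 4)}
    (hpq : p.length = q.length) :
    tmIndex τ (c :: p) ≤ tmIndex τ (d :: q) ↔
      tmChildRank τ c < tmChildRank τ d ∨
        c = d ∧ tmIndex (childType τ c) p ≤ tmIndex (childType τ c) q := by
  rw [tmIndex_cons, tmIndex_cons, hpq,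
    mul_add_le_mul_add_iff (hpq ▸ tmIndex_lt _ p) (tmIndex_lt _ q), Fin.lt_def, Fin.val_inj,
    (tmChildRank_injective τ).eq_iff]
  rcases eq_or_ne c d with rfl | hcd
  · rfl
  · simp [hcd]

def tmSuffix (τ : Fin 2) (m : List (Fin 4)) : Set (List (Fin 4)) :=
  {q | q.length = m.length ∧ tmIndex τ m ≤ tmIndex τ q}

lemma tmSuffix_cons (τ : Fin 2) (c : Fin 4) (m : List (Fin 4)) :
    tmSuffix τ (c :: m) = List.cons c '' tmSuffix (childType τ c) m ∪
      ⋃ d ∈ {d | tmChildRank τ c < tmChildRank τ d}, List.cons d '' levelSet m.length := by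
  ext (_ | ⟨d, q⟩)
  · simp [tmSuffix]
  · simp only [tmSuffix, levelSet, Set.mem_ofPred_eq, Set.mem_union, Set.mem_image,
      List.cons.injEq, Set.mem_iUnion, exists_prop, List.length_cons, Nat.add_right_cancel_iff]
    constructor
    · rintro ⟨hq, h⟩
      rcases (tmIndex_cons_le_cons_iff τ c d hq.symm).1 h with h | ⟨rfl, h'⟩
      · exact .inr ⟨d, h, q, hq, rfl, rfl⟩
      · exact .inl ⟨q, ⟨hq, h'⟩, rfl, rfl⟩
    · rintro (⟨q, ⟨hq, h⟩, rfl, rfl⟩ | ⟨d, h, q, hq, rfl, rfl⟩) <;>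
        exact ⟨hq, (tmIndex_cons_le_cons_iff τ _ _ hq.symm).2 (by tauto)⟩

lemma triCompBound_empty (x : Fin 3 → TMV) : triCompBound x ∅ 0 :=
  ⟨Fin.elim0, by simp, fun i => i.elim0⟩

lemma triCompBound.connected_union {x : Fin 3 → TMV} {G R : Set (List (Fin 4))} {n : ℕ}
    (hG : triFaceConnected x G) (hR : triCompBound x R n) : triCompBound x (G ∪ R) (n + 1) := by
  obtain ⟨f, rfl, hf⟩ := hR
  exact ⟨Fin.cons G f, (Set.iUnion_cons f G).symm, Fin.cases hG hf⟩

lemma triCompBound.image_cons {x : Fin 3 → TMV} {i : Fin 4} {A : Set (List (Fin 4))} {n : ℕ}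
    (h : triCompBound (beyChild x i) A n) : triCompBound x (List.cons i '' A) n := by
  obtain ⟨f, rfl, hf⟩ := h
  exact ⟨fun k => List.cons i '' f k, Set.image_iUnion, fun k => (hf k).image_cons⟩

lemma tmChildRank_trichotomy (τ : Fin 2) (c : Fin 4) :
    (c = 2 ∧ ∀ d, ¬tmChildRank τ c < tmChildRank τ d) ∨
    (c = 3 ∧ ∀ d, tmChildRank τ c < tmChildRank τ d ↔ d = 1 ∨ d = 2) ∨
    (tmChildRank τ c < tmChildRank τ 2 ∧
      (tmChildRank τ c < tmChildRank τ 3 ∨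
        ∀ d, tmChildRank τ c < tmChildRank τ d → d = 2)) := by
  revert τ c; decide

lemma triFaceConnected_biUnion_rank_gt {x : Fin 3 → TMV} (hx : triDet x ≠ 0) {L : ℕ}
    (hchild : ∀ d, triFaceConnected (beyChild x d) (levelSet L)) {τ : Fin 2} {c : Fin 4}
    (h2 : tmChildRank τ c < tmChildRank τ 2)
    (h3 : tmChildRank τ c < tmChildRank τ 3 ∨
      ∀ d, tmChildRank τ c < tmChildRank τ d → d = 2) :
    triFaceConnected x
      (⋃ d ∈ {d | tmChildRank τ c < tmChildRank τ d}, List.cons d '' levelSet L) := by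
  rcases h3 with h3 | honly
  · exact triFaceConnected_biUnion_children hx hchild h3
  · have hsingle : {d | tmChildRank τ c < tmChildRank τ d} = {2} :=
      Set.ext fun d => ⟨honly d, fun hd => hd ▸ h2⟩
    rw [hsingle, Set.biUnion_singleton]
    exact (hchild 2).image_cons

lemma triFaceConnected_cons_three_union {x : Fin 3 → TMV} (hx : triDet x ≠ 0) {L : ℕ}
    (hchild : ∀ d, triFaceConnected (beyChild x d) (levelSet L)) {G : Set (List (Fin 4))}
    (hG : triFaceConnected (beyChild x 3) G) (hanchor : List.replicate L 2 ∈ G) :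
    triFaceConnected x
      ((List.cons 3 '' G ∪ List.cons 1 '' levelSet L) ∪ List.cons 2 '' levelSet L) :=
  (hG.image_cons.union (hchild 1).image_cons ⟨_, hanchor, rfl⟩
      ⟨_, mem_levelSet_replicate L 2, rfl⟩ (triFaceNbr_one_two_three_two hx L).symm).union
    (hchild 2).image_cons (.inl ⟨_, hanchor, rfl⟩) ⟨_, mem_levelSet_replicate L 1, rfl⟩
    (triFaceNbr_two_one_three_two hx L).symm

lemma tmSuffix_nil (τ : Fin 2) : tmSuffix τ [] = {[]} := by
  ext q
  simp [tmSuffix, tmIndex, List.length_eq_zero_iff]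

lemma exists_tmSuffix_eq_union (m : List (Fin 4)) {x : Fin 3 → TMV} (hx : triDet x ≠ 0)
    (τ : Fin 2) : ∃ G R, tmSuffix τ m = G ∪ R ∧ triFaceConnected x G ∧
      List.replicate m.length 2 ∈ G ∧ triCompBound x R m.length := by
  induction m generalizing x τ with
  | nil =>
    refine ⟨{[]}, ∅, by rw [tmSuffix_nil, Set.union_empty], ?_, rfl, triCompBound_empty x⟩
    rintro p rfl q rfl
    exact .refl
  | cons c m ih =>
    obtain ⟨G, R, hGR, hG, hanchor, hR⟩ := ih (triDet_beyChild_ne_zero hx c) (childType τ c)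
    have hchild (d : Fin 4) := triFaceConnected_levelSet (triDet_beyChild_ne_zero hx d) m.length
    set L := m.length
    rw [tmSuffix_cons, hGR]
    have hR' : triCompBound x (List.cons c '' (G ∪ R)) (L + 1) := by
      rw [Set.image_union]
      exact hR.image_cons.connected_union hG.image_cons
    -- The children after `c` are complete. They form a connected block containing the last
    -- subtriangle, unless `c` is last or `c = 3` must itself link the children `1` and `2`.
    rcases tmChildRank_trichotomy τ c with ⟨rfl, hlast⟩ | ⟨rfl, hD⟩ | ⟨h2, hD⟩
    · refine ⟨List.cons 2 '' G, _, ?_, hG.image_cons, ⟨_, hanchor, rfl⟩, hR'⟩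
      have hempty : {d | tmChildRank τ 2 < tmChildRank τ d} = ∅ :=
        Set.eq_empty_iff_forall_notMem.2 hlast
      rw [hempty, Set.biUnion_empty, Set.union_empty,
        Set.union_eq_right.2 (Set.image_mono Set.subset_union_left)]
    · refine ⟨_, _, ?_, triFaceConnected_cons_three_union hx hchild hG hanchor,
        .inr ⟨_, mem_levelSet_replicate L 2, rfl⟩, hR'⟩
      have hpair : {d | tmChildRank τ 3 < tmChildRank τ d} = {1, 2} := by ext; simp [hD]
      rw [hpair, Set.biUnion_insert, Set.biUnion_singleton, Set.image_union]
      ext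
      simp only [Set.mem_union]
      tauto
    · exact ⟨_, _, Set.union_comm _ _, triFaceConnected_biUnion_rank_gt hx hchild h2 hD,
        Set.mem_biUnion h2 ⟨_, mem_levelSet_replicate L 2, rfl⟩, hR'⟩

lemma tmSegment.eq_tmSuffix {τ : Fin 2} {L : ℕ} {S : Set (List (Fin 4))} (hS : tmSegment τ L S)
    {l : List (Fin 4)} (hl : l ∈ S) (hlast : tmIndex τ l = 4 ^ L - 1) :
    ∃ m, m.length = L ∧ S = tmSuffix τ m := by
  set m := Function.argminOn (tmIndex τ) S ⟨l, hl⟩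
  have hm : m ∈ S := Function.argminOn_mem ..
  refine ⟨m, hS.1 m hm, Set.ext fun q => ⟨fun hq => ⟨by rw [hS.1 q hq, hS.1 m hm],
    Function.argminOn_le _ _ hq⟩, ?_⟩⟩
  · rintro ⟨hq, hmq⟩
    have := tmIndex_lt τ q
    rw [hq, hS.1 m hm] at this
    exact hS.2 m q l (hS.1 m hm) (hq.trans (hS.1 m hm)) (hS.1 l hl) hm hl hmq (by omega)

lemma triCompBound_of_tmSegment_last {x : Fin 3 → TMV} (hx : triDet x ≠ 0) {τ : Fin 2}
    {L : ℕ} {S : Set (List (Fin 4))} (hS : tmSegment τ L S) {l : List (Fin 4)} (hl : l ∈ S)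
    (hlast : tmIndex τ l = 4 ^ L - 1) : triCompBound x S (L + 1) := by
  obtain ⟨m, rfl, rfl⟩ := hS.eq_tmSuffix hl hlast
  obtain ⟨G, R, hGR, hG, -, hR⟩ := exists_tmSuffix_eq_union m hx τ
  exact hGR ▸ hR.connected_union hG

lemma beyChild_comp_rev (x : Fin 3 → TMV) (i : Fin 4) :
    beyChild (x ∘ Fin.rev) (Equiv.swap 0 2 i) = beyChild x i ∘ Fin.rev := by
  ext j : 1
  fin_cases i <;> fin_cases j <;> simp [beyChild, tmMid, Equiv.swap_apply_of_ne_of_ne, add_comm]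

lemma tmVerts_comp_rev (x : Fin 3 → TMV) (p : List (Fin 4)) :
    tmVerts (x ∘ Fin.rev) (p.map (Equiv.swap 0 2)) = tmVerts x p ∘ Fin.rev := by
  induction p generalizing x with
  | nil => rfl
  | cons i p ih => simp only [List.map_cons, tmVerts, beyChild_comp_rev, ih]

lemma tmIndex_map_swap (τ : Fin 2) (p : List (Fin 4)) :
    tmIndex (1 - τ) (p.map (Equiv.swap 0 2)) + tmIndex τ p + 1 = 4 ^ p.length := by
  induction p generalizing τ with
  | nil => rfl
  | cons i p ih =>
    have hrank : (tmChildRank (1 - τ) (Equiv.swap 0 2 i) : ℕ) + tmChildRank τ i = 3 := by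
      revert τ i; decide
    have htype : childType (1 - τ) (Equiv.swap 0 2 i) = 1 - childType τ i := by
      revert τ i; decide
    rw [List.map_cons, tmIndex_cons, tmIndex_cons, htype, List.length_map, List.length_cons,
      pow_succ]
    linear_combination ih (childType τ i) + 4 ^ p.length * hrank

lemma triFaceNbr.comp_rev {X Y : Fin 3 → TMV} (h : triFaceNbr X Y) :
    triFaceNbr (X ∘ Fin.rev) (Y ∘ Fin.rev) := by
  have h_set (Z : Fin 3 → TMV) : triSet (Z ∘ Fin.rev) = triSet Z := by
    rw [triSet, triSet]
    congr 1
    ext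
    simp only [Function.comp_apply, Set.mem_insert_iff, Set.mem_singleton_iff]
    tauto
  have h_edge (Z : Fin 3 → TMV) (e : Set TMV) (he : triIsEdge Z e) :
      triIsEdge (Z ∘ Fin.rev) e := by
    obtain ⟨i, j, hij, rfl⟩ := he
    exact ⟨i.rev, j.rev, Fin.rev_injective.ne hij, by simp⟩
  obtain ⟨e, hX, hY, he⟩ := h
  exact ⟨e, h_edge X e hX, h_edge Y e hY, by rw [h_set, h_set, he]⟩

lemma map_swap_involutive : Function.Involutive (List.map (Equiv.swap (0 : Fin 4) 2)) :=
  fun p => by simp [Function.comp_def]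

lemma triCompBound.image_map_swap {x : Fin 3 → TMV} {A : Set (List (Fin 4))} {n : ℕ}
    (h : triCompBound (x ∘ Fin.rev) A n) :
    triCompBound x (List.map (Equiv.swap 0 2) '' A) n := by
  have hx : (x ∘ Fin.rev) ∘ Fin.rev = x := by ext; simp
  have hconn (B : Set (List (Fin 4))) (hB : triFaceConnected (x ∘ Fin.rev) B) :
      triFaceConnected x (List.map (Equiv.swap 0 2) '' B) := by
    rintro _ ⟨p, hp, rfl⟩ _ ⟨q, hq, rfl⟩
    refine (hB p hp q hq).lift _ fun a b hab => ⟨⟨a, hab.1, rfl⟩, ⟨b, hab.2.1, rfl⟩, ?_⟩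
    rw [← hx, tmVerts_comp_rev, tmVerts_comp_rev]
    exact hab.2.2.comp_rev
  obtain ⟨f, rfl, hf⟩ := h
  exact ⟨fun k => List.map (Equiv.swap 0 2) '' f k, Set.image_iUnion, fun k => hconn _ (hf k)⟩

lemma tmSegment.preimage_map_swap {τ : Fin 2} {L : ℕ} {S : Set (List (Fin 4))}
    (hS : tmSegment τ L S) : tmSegment (1 - τ) L (List.map (Equiv.swap 0 2) ⁻¹' S) := by
  have hrev (p : List (Fin 4)) (hp : p.length = L) :
      tmIndex (1 - τ) p + tmIndex τ (p.map (Equiv.swap 0 2)) + 1 = 4 ^ L := by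
    have := tmIndex_map_swap τ (p.map (Equiv.swap 0 2))
    rwa [map_swap_involutive p, List.length_map, hp] at this
  refine ⟨fun p hp => by simpa using hS.1 _ hp, fun p q r hp hq hr hpS hrS hpq hqr => ?_⟩
  have h_p := hrev p hp
  have h_q := hrev q hq
  have h_r := hrev r hr
  exact hS.2 _ _ _ (by simpa) (by simpa) (by simpa) hrS hpS (by omega) (by omega)

lemma triCompBound_of_tmSegment_first {x : Fin 3 → TMV} (hx : AffineIndependent ℝ x)
    {τ : Fin 2} {L : ℕ} {S : Set (List (Fin 4))} (hS : tmSegment τ L S) {f : List (Fin 4)}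
    (hf : f ∈ S)
    (hfirst : tmIndex τ f = 0) : triCompBound x S (L + 1) := by
  have hx' : triDet (x ∘ Fin.rev) ≠ 0 :=
    triDet_ne_zero (hx.comp_embedding Fin.revPerm.toEmbedding)
  have hidx := tmIndex_map_swap τ f
  rw [hfirst, hS.1 f hf] at hidx
  have := triCompBound_of_tmSegment_last hx' hS.preimage_map_swap (l := f.map (Equiv.swap 0 2))
    (by rwa [Set.mem_preimage, map_swap_involutive]) (by omega)
  simpa [Set.image_preimage_eq _ map_swap_involutive.surjective] using this.image_map_swap

/-- For a root triangle of type `τ` uniformly refined to level `L`, any contiguous TM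
segment containing the last, or containing the first, level-`L` subtriangle in TM order
has at most `L + 1` face-connected components. -/
theorem tm_one_sided_segment_comp_bound (x0 : Fin 3 → TMV)
    (hx0 : AffineIndependent ℝ x0) (L : ℕ) (τ : Fin 2)
    (S : Set (List (Fin 4))) (hS : tmSegment τ L S)
    (hside : (∃ p ∈ S, tmIndex τ p = 4 ^ L - 1) ∨ (∃ p ∈ S, tmIndex τ p = 0)) :
    triCompBound x0 S (L + 1) := by
  rcases hside with ⟨l, hl, hlast⟩ | ⟨f, hf, hfirst⟩
  · exact triCompBound_of_tmSegment_last (triDet_ne_zero hx0) hS hl hlast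
  · exact triCompBound_of_tmSegment_first hx0 hS hf hfirst
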